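/- arXiv:1102.0729 — 6 statements merged into one kernel-verified Lean document; each statement's English description precedes it below -/
import Mathlib

section
/- Let Y be a metric space on which a group Γ acts by isometries, and suppose the action is proper and cocompact. Then there exists r > 0 such that the family {B(p,r)}_{p∈Y} of all open r-balls in Y is uniformly totally bounded: for every ε > 0 there exists N ∈ ℕ such that for every p ∈ Y the ball B(p,r) can be covered by at most N open balls of radius ε. -/
/-- If a group `Γ` acts properly and cocompactly by isometries on a
metric space `Y`, then there exists `r > 0` such that the family of all open
`r`-balls in `Y` is uniformly totally bounded: for every `ε > 0` there is `N ∈ ℕ`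
such that every ball `B(p, r)` can be covered by at most `N` open balls of
radius `ε`. -/
theorem balls_uniformly_totally_bounded_of_proper_cocompact
    {Y : Type*} [MetricSpace Y] {Γ : Type*} [Group Γ] [MulAction Γ Y]
    (hiso : ∀ γ : Γ, Isometry (fun y : Y => γ • y))
    (hcocompact : ∃ K : Set Y, IsCompact K ∧ (⋃ γ : Γ, (fun y : Y => γ • y) '' K) = Set.univ)
    (hproper : ∀ x : Y, ∃ r > 0,
      {γ : Γ | ((fun y : Y => γ • y) '' Metric.ball x r ∩ Metric.ball x r).Nonempty}.Finite) :
    ∃ r > 0, ∀ ε > 0, ∃ N : ℕ, ∀ p : Y, ∃ S : Finset Y,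
      S.card ≤ N ∧ Metric.ball p r ⊆ ⋃ s ∈ S, Metric.ball s ε := by
  classical
  obtain ⟨K, hKc, hKcov⟩ := hcocompact
  rcases isEmpty_or_nonempty Y with hY | hY
  · exact ⟨1, one_pos, fun ε hε => ⟨0, fun p => (IsEmpty.false p).elim⟩⟩
  choose rf rfpos Ffin using hproper
  have hdist : ∀ (γ : Γ) (a b : Y), dist (γ • a) (γ • b) = dist a b :=
    fun γ a b => (hiso γ).dist_eq a b
  have hcov' : ∀ p : Y, ∃ γ : Γ, ∃ c ∈ K, γ • c = p := by
    intro p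
    have : p ∈ ⋃ γ : Γ, (fun y : Y => γ • y) '' K := hKcov ▸ Set.mem_univ p
    simpa using this
  obtain ⟨y0⟩ := hY
  obtain ⟨γ0, c0, hc0, -⟩ := hcov' y0
  obtain ⟨t, htK, htcov⟩ := hKc.elim_nhds_subcover (fun k => Metric.ball k (rf k / 8))
    (fun k _ => Metric.ball_mem_nhds k (by have := rfpos k; positivity))
  have htne : t.Nonempty := by
    have := htcov hc0
    simp only [Set.mem_iUnion] at this
    obtain ⟨i, hi, -⟩ := this
    exact ⟨i, hi⟩
  -- The sets of group elements moving a small ball near j into a ball near i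
  set G : Y → Y → Set Γ :=
    fun i j => {γ : Γ | ∃ c : Y, dist c j < rf j / 8 ∧ dist (γ • c) i < rf i / 4} with hG
  have hGfin : ∀ i j : Y, (G i j).Finite := by
    intro i j
    rcases (G i j).eq_empty_or_nonempty with he | ⟨γ', c', hc'j, hc'i⟩
    · simp [he]
    have hsub : G i j ⊆ ((fun g => γ' * g) ''
        {γ : Γ | ((fun y : Y => γ • y) '' Metric.ball j (rf j) ∩ Metric.ball j (rf j)).Nonempty})
        ∪ ((fun g => g * γ') ''
        {γ : Γ | ((fun y : Y => γ • y) '' Metric.ball i (rf i) ∩ Metric.ball i (rf i)).Nonempty}) := by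
      rintro γ ⟨c, hcj, hci⟩
      rcases le_total (rf i) (rf j) with hij | hij
      · left
        refine ⟨γ'⁻¹ * γ, ?_, by group⟩
        refine ⟨(γ'⁻¹ * γ) • j, ⟨j, Metric.mem_ball_self (rfpos j), rfl⟩, ?_⟩
        have h1 : dist ((γ'⁻¹ * γ) • j) j = dist (γ • j) (γ' • j) := by
          rw [← hdist γ' ((γ'⁻¹ * γ) • j) j, smul_smul]
          congr 2
          group
        rw [Metric.mem_ball, h1]
        calc dist (γ • j) (γ' • j)
            ≤ dist (γ • j) (γ • c) + dist (γ • c) i + dist i (γ' • c') + dist (γ' • c') (γ' • j) := by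
              have := dist_triangle4 (γ • j) (γ • c) i (γ' • j)
              have h2 := dist_triangle i (γ' • c') (γ' • j)
              linarith
          _ = dist j c + dist (γ • c) i + dist (γ' • c') i + dist c' j := by
              rw [hdist, hdist, dist_comm i (γ' • c')]
          _ < rf j / 8 + rf i / 4 + rf i / 4 + rf j / 8 := by
              rw [dist_comm j c]; linarith
          _ ≤ rf j := by linarith [rfpos j]
      · right
        refine ⟨γ * γ'⁻¹, ?_, by group⟩
        refine ⟨(γ * γ'⁻¹) • i, ⟨i, Metric.mem_ball_self (rfpos i), rfl⟩, ?_⟩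
        rw [Metric.mem_ball]
        calc dist ((γ * γ'⁻¹) • i) i
            ≤ dist ((γ * γ'⁻¹) • i) (γ • c') + dist (γ • c') (γ • c) + dist (γ • c) i := by
              exact dist_triangle4 _ _ _ _
          _ = dist (γ' • c') i + dist c' c + dist (γ • c) i := by
              congr 1
              congr 1
              · have : (γ * γ'⁻¹) • i = γ • (γ'⁻¹ • i) := by rw [smul_smul]
                rw [this, hdist, ← hdist γ', smul_inv_smul, dist_comm i (γ' • c')]
              · rw [hdist]
          _ ≤ dist (γ' • c') i + (dist c' j + dist c j) + dist (γ • c) i := by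
              linarith [dist_triangle c' j c, dist_comm j c]
          _ < rf i / 4 + (rf j / 8 + rf j / 8) + rf i / 4 := by
              linarith
          _ ≤ rf i := by linarith [rfpos i]
    exact Set.Finite.subset (((Ffin j).image _).union ((Ffin i).image _)) hsub
  -- The compact set C
  set C : Set Y := ⋃ i ∈ t, ⋃ j ∈ t, ⋃ γ ∈ G i j, (fun y : Y => γ • y) '' K with hCdef
  have hCcomp : IsCompact C := by
    apply t.finite_toSet.isCompact_biUnion
    intro i _
    apply t.finite_toSet.isCompact_biUnion
    intro j _
    apply (hGfin i j).isCompact_biUnion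
    intro γ _
    exact hKc.image (hiso γ).continuous
  have hballC : ∀ i ∈ t, Metric.ball i (rf i / 4) ⊆ C := by
    intro i hi y hy
    obtain ⟨γ, c, hcK, rfl⟩ := hcov' y
    have := htcov hcK
    simp only [Set.mem_iUnion] at this
    obtain ⟨j, hj, hcj⟩ := this
    have hγG : γ ∈ G i j := ⟨c, Metric.mem_ball.mp hcj, Metric.mem_ball.mp hy⟩
    exact Set.mem_biUnion hi (Set.mem_biUnion hj (Set.mem_biUnion hγG ⟨c, hcK, rfl⟩))
  -- the radius r
  set r : ℝ := (t.inf' htne rf) / 8 with hrdef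
  have hrpos : 0 < r := by
    have : 0 < t.inf' htne rf := (Finset.lt_inf'_iff htne).mpr (fun i _ => rfpos i)
    positivity
  have hrle : ∀ i ∈ t, r ≤ rf i / 8 := by
    intro i hi
    have := Finset.inf'_le rf hi
    rw [hrdef]
    linarith
  refine ⟨r, hrpos, ?_⟩
  intro ε hε
  obtain ⟨S0set, hS0fin, hS0cov⟩ := (Metric.totallyBounded_iff.mp hCcomp.totallyBounded) ε hε
  refine ⟨hS0fin.toFinset.card, ?_⟩
  intro p
  obtain ⟨γ₀, c, hcK, rfl⟩ := hcov' p
  have := htcov hcK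
  simp only [Set.mem_iUnion] at this
  obtain ⟨i, hi, hci⟩ := this
  refine ⟨hS0fin.toFinset.image (fun s => γ₀ • s), Finset.card_image_le, ?_⟩
  intro y hy
  set z : Y := γ₀⁻¹ • y with hzdef
  have hzy : γ₀ • z = y := smul_inv_smul γ₀ y
  have hzc : dist z c = dist y (γ₀ • c) := by
    rw [← hdist γ₀ z c, hzy]
  have hzball : z ∈ Metric.ball i (rf i / 4) := by
    rw [Metric.mem_ball]
    have h1 : dist z c < r := by rw [hzc]; exact Metric.mem_ball.mp hy
    have h2 : dist c i < rf i / 8 := Metric.mem_ball.mp hci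
    have h3 := dist_triangle z c i
    have h4 := hrle i hi
    linarith
  have hzC : z ∈ C := hballC i hi hzball
  have := hS0cov hzC
  simp only [Set.mem_iUnion] at this
  obtain ⟨s, hs, hzs⟩ := this
  simp only [Set.mem_iUnion, Finset.mem_image, Set.Finite.mem_toFinset, exists_prop]
  refine ⟨γ₀ • s, ⟨s, hs, rfl⟩, ?_⟩
  rw [Metric.mem_ball, ← hzy, hdist]
  exact Metric.mem_ball.mp hzs
end

section
/- Let Y be a metric space on which a group Γ acts by isometries, and suppose the action is proper and cocompact. Then there exists r₀ > 0 such that for every y ∈ Y and every s with 0 < s < r₀, the closed ball of radius s centered at y is compact; in particular, Y is locally compact. -/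
/-!
Let `K` be a compact set whose translates cover `Y`. Cover `K` by finitely many balls
`ball m (r m / 3)`, where `r m` is a properness radius at `m`, and let `s` be the least of the
`r m / 3`. Comparing two translates that meet the same ball of radius `s` shows that only
finitely many translates `γ • K` meet any ball of radius `s`; so every closed ball of radius
`< s` lies in a finite union of compact sets and is compact.
-/

open Metric Set Filter Topology

section IsometricAction

variable {Y Γ : Type*} [PseudoMetricSpace Y] [Group Γ] [MulAction Γ Y] [IsIsometricSMul Γ Y]

/-- If `γ₀` and `γ` both move `ball x a` into `ball y b`, then `γ₀⁻¹ * γ` moves `ball x a`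
into `ball x (a + 2 * b)`. -/
theorem finite_smul_ball_inter_ball {x y : Y} {a b R : ℝ}
    (hfin : {γ : Γ | ((γ • ·) '' ball x R ∩ ball x R).Nonempty}.Finite) (h : a + 2 * b ≤ R) :
    {γ : Γ | ((γ • ·) '' ball x a ∩ ball y b).Nonempty}.Finite := by
  rcases eq_empty_or_nonempty {γ : Γ | ((γ • ·) '' ball x a ∩ ball y b).Nonempty} with
    hempty | ⟨γ₀, _, ⟨q, hq, rfl⟩, hqy⟩
  · exact hempty ▸ finite_empty
  have hb : 0 < b := pos_of_mem_ball hqy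
  refine (hfin.image (γ₀ * ·)).subset ?_
  rintro γ ⟨_, ⟨p, hp, rfl⟩, hpy⟩
  refine ⟨γ₀⁻¹ * γ, ⟨_, ⟨p, ball_subset_ball (by linarith) hp, rfl⟩, ?_⟩, mul_inv_cancel_left _ _⟩
  rw [mem_ball] at hp hq hpy hqy ⊢
  calc dist ((γ₀⁻¹ * γ) • p) x = dist (γ • p) (γ₀ • x) := by
        rw [mul_smul, ← dist_smul γ₀, smul_inv_smul]
    _ ≤ dist (γ • p) y + dist y (γ₀ • q) + dist (γ₀ • q) (γ₀ • x) := dist_triangle4 _ _ _ _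
    _ < b + b + a := by rw [dist_comm y, dist_smul]; gcongr
    _ ≤ R := by linarith

theorem IsCompact.exists_pos_finite_smul_inter_ball {K : Set Y} (hK : IsCompact K)
    (hproper : ∀ x : Y, ∃ r > 0, {γ : Γ | ((γ • ·) '' ball x r ∩ ball x r).Nonempty}.Finite) :
    ∃ s > 0, ∀ y : Y, {γ : Γ | ((γ • ·) '' K ∩ ball y s).Nonempty}.Finite := by
  choose r hr hfin using hproper
  obtain ⟨t, -, hKt⟩ := hK.elim_nhds_subcover (fun m => ball m (r m / 3))
    fun m _ => ball_mem_nhds m (by linarith [hr m])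
  have hsmall : ∀ᶠ s in 𝓝[>] (0 : ℝ), ∀ m ∈ t, s < r m / 3 :=
    (eventually_all_finset t).2 fun m _ =>
      eventually_nhdsWithin_of_eventually_nhds (eventually_lt_nhds (by linarith [hr m]))
  obtain ⟨s, hs, hspos⟩ := (hsmall.and self_mem_nhdsWithin).exists
  refine ⟨s, hspos, fun y => ?_⟩
  refine (t.finite_toSet.biUnion fun m hm =>
    finite_smul_ball_inter_ball (y := y) (a := r m / 3) (b := s) (hfin m) (by linarith [hs m hm])).subset ?_
  rintro γ ⟨_, ⟨p, hp, rfl⟩, hpy⟩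
  obtain ⟨m, hm, hpm⟩ := mem_iUnion₂.mp (hKt hp)
  exact mem_iUnion₂.mpr ⟨m, hm, _, ⟨p, hpm, rfl⟩, hpy⟩

end IsometricAction

theorem isCompact_of_finite_smul_inter {Y Γ : Type*} [TopologicalSpace Y] [SMul Γ Y]
    [ContinuousConstSMul Γ Y] {K U C : Set Y} (hK : IsCompact K)
    (hcover : ⋃ γ : Γ, (γ • ·) '' K = univ)
    (hfin : {γ : Γ | ((γ • ·) '' K ∩ U).Nonempty}.Finite) (hC : IsClosed C) (hCU : C ⊆ U) :
    IsCompact C := by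
  refine (hfin.isCompact_biUnion fun γ _ => hK.image (continuous_const_smul γ)).of_isClosed_subset
    hC fun z hz => ?_
  obtain ⟨γ, p, hp, rfl⟩ := mem_iUnion.mp (hcover ▸ mem_univ z)
  exact mem_biUnion ⟨_, ⟨p, hp, rfl⟩, hCU hz⟩ ⟨p, hp, rfl⟩

/-- If a group `Γ` acts properly and cocompactly by isometries on a
metric space `Y`, then there exists `r₀ > 0` such that for every `y ∈ Y` and every
`s` with `0 < s < r₀`, the closed ball of radius `s` centered at `y` is compact;
in particular, `Y` is locally compact. -/
theorem locally_compact_of_proper_cocompact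
    {Y : Type*} [MetricSpace Y] {Γ : Type*} [Group Γ] [MulAction Γ Y]
    (hiso : ∀ γ : Γ, Isometry (fun y : Y => γ • y))
    (hcocompact : ∃ K : Set Y, IsCompact K ∧ (⋃ γ : Γ, (fun y : Y => γ • y) '' K) = Set.univ)
    (hproper : ∀ x : Y, ∃ r > 0,
      {γ : Γ | ((fun y : Y => γ • y) '' Metric.ball x r ∩ Metric.ball x r).Nonempty}.Finite) :
    (∃ r₀ > 0, ∀ (y : Y) (s : ℝ), 0 < s → s < r₀ → IsCompact (Metric.closedBall y s)) ∧
      LocallyCompactSpace Y := by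
  have : IsIsometricSMul Γ Y := ⟨hiso⟩
  obtain ⟨K, hK, hcover⟩ := hcocompact
  obtain ⟨r₀, hr₀, hfin⟩ := hK.exists_pos_finite_smul_inter_ball hproper
  have hball : ∀ (y : Y) (s : ℝ), 0 < s → s < r₀ → IsCompact (closedBall y s) :=
    fun y _ _ hs => isCompact_of_finite_smul_inter hK hcover (hfin y) isClosed_closedBall
      (closedBall_subset_ball hs)
  have : WeaklyLocallyCompactSpace Y := ⟨fun y => ⟨closedBall y (r₀ / 2),
    hball y _ (half_pos hr₀) (half_lt_self hr₀), closedBall_mem_nhds y (half_pos hr₀)⟩⟩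
  exact ⟨⟨r₀, hr₀, hball⟩, inferInstance⟩
end

section
/- Let (X,d) be a metric space and S ⊆ X a finite subset such that X is covered by the open balls of radius π/12 centered at the points of S. Then for all x, y ∈ X with d(x,y) ≥ π/3 there exist two distinct elements s₀, s₁ ∈ S with |d(x,s₀) − d(y,s₀)| ≥ π/6 and |d(x,s₁) − d(y,s₁)| ≥ π/6. In particular, if #S ≥ 3, then X has property P(π/3, 2/#S, π/6). -/
/-- A metric space `X` has property `P(θ, α, ε)` if there is a finite subset `S ⊆ X`
such that for all `x, y ∈ X` with `d(x,y) ≥ θ`, the number of `s ∈ S` with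
`|d(x,s) − d(y,s)| ≥ ε` is at least `α · #S`. -/
def PropertyP (X : Type*) [MetricSpace X] (θ α ε : ℝ) : Prop :=
  ∃ S : Finset X, ∀ x y : X, θ ≤ dist x y →
    α * (S.card : ℝ) ≤ ({s : X | s ∈ S ∧ ε ≤ |dist x s - dist y s|}.ncard : ℝ)

lemma two_sep_main {X : Type*} [MetricSpace X] (S : Finset X)
    (hcov : ∀ x : X, ∃ s ∈ S, dist x s < Real.pi / 12) :
    ∀ x y : X, Real.pi / 3 ≤ dist x y →
      ∃ s₀ ∈ S, ∃ s₁ ∈ S, s₀ ≠ s₁ ∧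
        Real.pi / 6 ≤ |dist x s₀ - dist y s₀| ∧
        Real.pi / 6 ≤ |dist x s₁ - dist y s₁| := by
  intro x y hxy
  obtain ⟨s₀, hs₀S, hs₀⟩ := hcov x
  obtain ⟨s₁, hs₁S, hs₁⟩ := hcov y
  have hpi := Real.pi_pos
  refine ⟨s₀, hs₀S, s₁, hs₁S, ?_, ?_, ?_⟩
  · rintro rfl
    have := dist_triangle x s₀ y
    rw [dist_comm s₀ y] at this
    linarith
  · have h1 : dist x y ≤ dist x s₀ + dist s₀ y := dist_triangle x s₀ y
    rw [dist_comm s₀ y] at h1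
    rw [abs_sub_comm, abs_of_nonneg (by linarith)]
    linarith
  · have h1 : dist x y ≤ dist x s₁ + dist s₁ y := dist_triangle x s₁ y
    rw [dist_comm s₁ y] at h1
    rw [abs_of_nonneg (by linarith)]
    linarith

/-- If a metric space `X` is covered by open balls of radius `π/12`
centered at the points of a finite subset `S`, then any two points at distance at
least `π/3` admit two distinct elements `s₀, s₁ ∈ S` with
`|d(x,sᵢ) − d(y,sᵢ)| ≥ π/6`; in particular, if `#S ≥ 3` then `X` has property
`P(π/3, 2/#S, π/6)`. -/
theorem two_separating_centers
    {X : Type*} [MetricSpace X] (S : Finset X)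
    (hcov : ∀ x : X, ∃ s ∈ S, dist x s < Real.pi / 12) :
    (∀ x y : X, Real.pi / 3 ≤ dist x y →
      ∃ s₀ ∈ S, ∃ s₁ ∈ S, s₀ ≠ s₁ ∧
        Real.pi / 6 ≤ |dist x s₀ - dist y s₀| ∧
        Real.pi / 6 ≤ |dist x s₁ - dist y s₁|) ∧
    (3 ≤ S.card → PropertyP X (Real.pi / 3) (2 / (S.card : ℝ)) (Real.pi / 6)) := by
  refine ⟨two_sep_main S hcov, fun hcard => ⟨S, fun x y hxy => ?_⟩⟩
  obtain ⟨s₀, hs₀S, s₁, hs₁S, hne, h₀, h₁⟩ := two_sep_main S hcov x y hxy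
  have hcpos : (0:ℝ) < S.card := by positivity
  have hfin : ({s : X | s ∈ S ∧ Real.pi / 6 ≤ |dist x s - dist y s|}).Finite :=
    (S.finite_toSet).subset (fun s hs => hs.1)
  have hsub : ({s₀, s₁} : Set X) ⊆ {s : X | s ∈ S ∧ Real.pi / 6 ≤ |dist x s - dist y s|} := by
    rintro s (rfl | rfl)
    exacts [⟨hs₀S, h₀⟩, ⟨hs₁S, h₁⟩]
  have h2 : 2 ≤ ({s : X | s ∈ S ∧ Real.pi / 6 ≤ |dist x s - dist y s|}).ncard := by
    have := Set.ncard_le_ncard hsub hfin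
    rwa [Set.ncard_pair hne] at this
  have h2' : (2:ℝ) ≤ (({s : X | s ∈ S ∧ Real.pi / 6 ≤ |dist x s - dist y s|}).ncard : ℝ) := by
    exact_mod_cast h2
  rw [div_mul_cancel₀]
  · exact h2'
  · exact ne_of_gt hcpos
end

section
/- Let ω be an ultrafilter on a set I, and let {(X_i, d_i)}_{i∈I} be metric spaces each of which has the approximate intermediate point property. Let r > 0 and let (x_i)_{i∈I}, (y_i)_{i∈I} be sequences with x_i, y_i ∈ X_i for each i such that ω-lim_i d_i(x_i, y_i) ≤ r. Then there exists a sequence (y'_i)_{i∈I} with y'_i ∈ X_i such that d_i(x_i, y'_i) ≤ r for every i ∈ I and ω-lim_i d_i(y_i, y'_i) = 0. (This is the pointwise form of the statement that in the ultralimit of length spaces, the closed r-ball around ω-lim x_i equals ω-lim of the closed r-balls around the x_i.) -/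
open Filter ENNReal

/-- A metric space `X` has the approximate intermediate point property if for all
`x, y ∈ X`, every `η > 0` and every `s ∈ [0, d(x,y)]` there exists `z ∈ X` with
`d(x,z) ≤ s + η` and `d(z,y) ≤ d(x,y) − s + η`. Every length space has this
property. -/
def ApproxIntermediatePointProperty (X : Type*) [MetricSpace X] : Prop :=
  ∀ x y : X, ∀ η > (0 : ℝ), ∀ s ∈ Set.Icc (0 : ℝ) (dist x y),
    ∃ z : X, dist x z ≤ s + η ∧ dist z y ≤ dist x y - s + η

/-- In the ultralimit of metric spaces with the approximate
intermediate point property (e.g. length spaces), the closed `r`-ball around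
`ω-lim xᵢ` equals the ultralimit of the closed `r`-balls around the `xᵢ`
(pointwise form). -/
theorem ultralimit_closedBall
    {I : Type*} (ω : Ultrafilter I) (X : I → Type*) [∀ i, MetricSpace (X i)]
    (hX : ∀ i, ApproxIntermediatePointProperty (X i))
    (r : ℝ) (hr : 0 < r) (x y : ∀ i, X i) (L : ℝ≥0∞)
    (hL : Tendsto (fun i => edist (x i) (y i)) (ω : Filter I) (nhds L))
    (hLr : L ≤ ENNReal.ofReal r) :
    ∃ y' : ∀ i, X i, (∀ i, dist (x i) (y' i) ≤ r) ∧
      Tendsto (fun i => edist (y i) (y' i)) (ω : Filter I) (nhds 0) := by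
  classical
  have key : ∀ i, ∃ z : X i, dist (x i) z ≤ r ∧
      dist (y i) z ≤ 2 * max (dist (x i) (y i) - r) 0 := by
    intro i
    by_cases h : dist (x i) (y i) ≤ r
    · exact ⟨y i, h, by simp⟩
    · push_neg at h
      set d := dist (x i) (y i) with hd
      set η := min r (d - r) / 2 with hη
      have hη0 : 0 < η := by
        have := lt_min hr (sub_pos.2 h)
        positivity
      have hηr : η ≤ r := by
        have : min r (d - r) ≤ r := min_le_left _ _
        linarith
      obtain ⟨z, hz1, hz2⟩ := hX i (x i) (y i) η hη0 (r - η)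
        ⟨by linarith, by linarith⟩
      refine ⟨z, by linarith, ?_⟩
      have h2η : 2 * η ≤ d - r := by
        have : min r (d - r) ≤ d - r := min_le_right _ _
        linarith
      have hmax : max (d - r) 0 = d - r := max_eq_left (by linarith)
      rw [dist_comm, hmax]
      linarith
  choose y' hy'1 hy'2 using key
  refine ⟨y', hy'1, ?_⟩
  rw [ENNReal.tendsto_nhds_zero]
  intro ε hε
  set m := min ε 1 with hm
  have hm0 : 0 < m := lt_min hε zero_lt_one
  have hmtop : m ≠ ⊤ := ne_top_of_le_ne_top one_ne_top (min_le_right _ _)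
  set t := m.toReal with ht
  have ht0 : 0 < t := ENNReal.toReal_pos hm0.ne' hmtop
  have hofm : ENNReal.ofReal t = m := ENNReal.ofReal_toReal hmtop
  have hLlt : L < ENNReal.ofReal (r + t / 4) :=
    lt_of_le_of_lt hLr ((ENNReal.ofReal_lt_ofReal_iff (by linarith)).2 (by linarith))
  have h1 : ∀ᶠ i in (ω : Filter I), edist (x i) (y i) < ENNReal.ofReal (r + t / 4) :=
    hL.eventually_lt_const hLlt
  filter_upwards [h1] with i hi
  have hdi : dist (x i) (y i) < r + t / 4 := edist_lt_ofReal.1 hi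
  have hb : dist (y i) (y' i) ≤ t := by
    refine le_trans (hy'2 i) ?_
    have : max (dist (x i) (y i) - r) 0 ≤ t / 4 :=
      max_le (by linarith) (by linarith)
    linarith
  calc edist (y i) (y' i) = ENNReal.ofReal (dist (y i) (y' i)) := edist_dist _ _
    _ ≤ ENNReal.ofReal t := ENNReal.ofReal_le_ofReal hb
    _ = m := hofm
    _ ≤ ε := min_le_left _ _
end

section
/- Let ω be an ultrafilter on a set I, let {(X_i, d_i)}_{i∈I} be metric spaces each having the approximate intermediate point property, let N ∈ ℕ and r > 0, and let (x_i)_{i∈I} be a sequence with x_i ∈ X_i. Suppose that for each i ∈ I there are points x_i^{(1)}, …, x_i^{(N)} ∈ X_i such that the closed ball of radius r centered at x_i is contained in the union of the closed balls of radius r/2 centered at x_i^{(1)}, …, x_i^{(N)}. Then for every sequence (y_i)_{i∈I} with y_i ∈ X_i and ω-lim_i d_i(x_i, y_i) ≤ r, there exists k ∈ {1, …, N} with ω-lim_i d_i(x_i^{(k)}, y_i) ≤ r/2. (This is the pointwise form of the statement that the closed r-ball in the ultralimit is covered by N closed balls of radius r/2.) -/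
open Filter ENNReal

/-- If in each `Xᵢ` the closed `r`-ball around `xᵢ` is covered by `N`
closed `r/2`-balls with centers `xᵢ⁽¹⁾, …, xᵢ⁽ᴺ⁾`, then the closed `r`-ball in the
ultralimit around `ω-lim xᵢ` is covered by the `N` closed `r/2`-balls around the
`ω-lim xᵢ⁽ᵏ⁾` (pointwise form). -/
theorem ultralimit_ball_covered
    {I : Type*} (ω : Ultrafilter I) (X : I → Type*) [∀ i, MetricSpace (X i)]
    (hX : ∀ i, ApproxIntermediatePointProperty (X i))
    (N : ℕ) (r : ℝ) (hr : 0 < r) (x : ∀ i, X i) (c : ∀ i, Fin N → X i)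
    (hcov : ∀ i, Metric.closedBall (x i) r ⊆
      ⋃ k : Fin N, Metric.closedBall (c i k) (r / 2))
    (y : ∀ i, X i) (L : ℝ≥0∞)
    (hL : Tendsto (fun i => edist (x i) (y i)) (ω : Filter I) (nhds L))
    (hLr : L ≤ ENNReal.ofReal r) :
    ∃ k : Fin N, ∃ M : ℝ≥0∞,
      Tendsto (fun i => edist (c i k) (y i)) (ω : Filter I) (nhds M) ∧
      M ≤ ENNReal.ofReal (r / 2) := by
  have hI : Nonempty I := Filter.nonempty_of_neBot (ω : Filter I)
  obtain ⟨i0⟩ := hI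
  have hN : N ≠ 0 := by
    intro h
    subst h
    have := hcov i0 (Metric.mem_closedBall_self hr.le)
    simpa using this
  haveI : Nonempty (Fin N) := Fin.pos_iff_nonempty.mp (Nat.pos_of_ne_zero hN)
  set M : Fin N → ℝ≥0∞ := fun k => (ω.map (fun i => edist (c i k) (y i))).lim with hMdef
  have hMk : ∀ k, Tendsto (fun i => edist (c i k) (y i)) (ω : Filter I) (nhds (M k)) :=
    fun k => (ω.map (fun i => edist (c i k) (y i))).le_nhds_lim
  have key : ∀ ε : ℝ, 0 < ε → ε ≤ r →
      ∃ k, M k ≤ ENNReal.ofReal (r / 2) + ENNReal.ofReal (3 * ε) := by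
    intro ε hε hεr
    have hA : ∀ᶠ i in (ω : Filter I), dist (x i) (y i) < r + ε := by
      have h1 : L < ENNReal.ofReal (r + ε) :=
        lt_of_le_of_lt hLr ((ENNReal.ofReal_lt_ofReal_iff (by linarith)).mpr (by linarith))
      filter_upwards [hL.eventually_lt_const h1] with i hi
      rw [edist_dist] at hi
      exact (ENNReal.ofReal_lt_ofReal_iff_of_nonneg dist_nonneg).mp hi
    have hB : ∀ᶠ i in (ω : Filter I), ∃ k, dist (c i k) (y i) ≤ r / 2 + 3 * ε := by
      filter_upwards [hA] with i hi
      by_cases hxy : dist (x i) (y i) ≤ r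
      · obtain ⟨_, ⟨k, rfl⟩, hk⟩ := hcov i (Metric.mem_closedBall'.mpr hxy)
        have hk' := Metric.mem_closedBall.mp hk
        rw [dist_comm] at hk'
        exact ⟨k, by linarith⟩
      · push_neg at hxy
        obtain ⟨z, hz1, hz2⟩ := hX i (x i) (y i) ε hε (r - ε)
          ⟨by linarith, by linarith⟩
        have hz1' : dist (x i) z ≤ r := by linarith
        obtain ⟨_, ⟨k, rfl⟩, hk⟩ := hcov i (Metric.mem_closedBall'.mpr hz1')
        refine ⟨k, ?_⟩
        calc dist (c i k) (y i) ≤ dist (c i k) z + dist z (y i) := dist_triangle _ _ _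
          _ ≤ r / 2 + 3 * ε := by
              have := Metric.mem_closedBall.mp hk
              rw [dist_comm] at this
              linarith
    -- turn into a union and use ultrafilter
    have : (⋃ k : Fin N, {i | dist (c i k) (y i) ≤ r / 2 + 3 * ε}) ∈ ω := by
      apply Filter.mem_of_superset hB
      intro i ⟨k, hk⟩
      exact Set.mem_iUnion.mpr ⟨k, hk⟩
    rw [← Set.biUnion_univ] at this
    obtain ⟨k, -, hk⟩ := (Ultrafilter.finite_biUnion_mem_iff Set.finite_univ).mp this
    refine ⟨k, ?_⟩
    rw [← ENNReal.ofReal_add (by linarith) (by linarith)]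
    refine le_of_tendsto (hMk k) ?_
    filter_upwards [hk] with i hi
    rw [edist_dist]
    exact ENNReal.ofReal_le_ofReal hi
  obtain ⟨k0, -, hk0⟩ := Finset.exists_min_image Finset.univ M ⟨Classical.arbitrary _, Finset.mem_univ _⟩
  refine ⟨k0, M k0, hMk k0, ?_⟩
  refine ENNReal.le_of_forall_pos_le_add fun ε hε _ => ?_
  obtain ⟨k, hk⟩ := key (min ((ε : ℝ) / 3) r) (lt_min (by positivity) hr) (min_le_right _ _)
  refine le_trans (hk0 k (Finset.mem_univ k)) (le_trans hk ?_)
  gcongr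
  rw [← ENNReal.ofReal_coe_nnreal]
  apply ENNReal.ofReal_le_ofReal
  have := min_le_left ((ε : ℝ) / 3) r
  linarith
end

section
/- Let ω be an ultrafilter on a set I, let N ∈ ℕ, and let {(X_i, d_i)}_{i∈I} be metric spaces each having the approximate intermediate point property and each doubling with doubling constant N. Then for every r > 0 and every sequence (x_i)_{i∈I} with x_i ∈ X_i, there exist sequences (x_i^{(1)})_{i∈I}, …, (x_i^{(N)})_{i∈I} with x_i^{(k)} ∈ X_i such that: for every sequence (y_i)_{i∈I} with y_i ∈ X_i and ω-lim_i d_i(x_i, y_i) ≤ r, there exists k ∈ {1, …, N} with ω-lim_i d_i(x_i^{(k)}, y_i) ≤ r/2. (This is the pointwise form of the statement that the ultralimit of doubling length spaces with a common doubling constant is doubling with the same constant.) -/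
open Filter ENNReal

/-- A metric space is doubling with doubling constant `N` if every closed ball can
be covered by at most `N` closed balls of half the radius. -/
def DoublingWithConstant (X : Type*) [MetricSpace X] (N : ℕ) : Prop :=
  ∀ (x : X) (R : ℝ), ∃ c : Fin N → X,
    Metric.closedBall x R ⊆ ⋃ k : Fin N, Metric.closedBall (c k) (R / 2)

/-!
Cover the closed ball of radius `r` about each `x i` by `N` balls of radius `r / 2` with centres
`c i k`, and let `ω-lim d(x_i, y_i) ≤ r`. For `ε > 0`, the approximate intermediate point property
moves `y_i`, for `ω`-almost every `i`, to a point `z_i` of the ball of radius `r` with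
`d(z_i, y_i) ≤ ε`. The ultrafilter then selects one `k` with `d(c_i^{(k)}, z_i) ≤ r / 2` for
`ω`-almost every `i`, so `ω-lim d(c_i^{(k)}, y_i) ≤ r / 2 + ε`. Since there are finitely many `k`,
the one with the smallest ultralimit satisfies this for every `ε`.
-/

open Metric
open scoped NNReal

theorem Ultrafilter.exists_tendsto {I Y : Type*} [TopologicalSpace Y] [CompactSpace Y]
    (ω : Ultrafilter I) (f : I → Y) : ∃ M, Tendsto f ω (nhds M) :=
  ⟨(ω.map f).lim, (ω.map f).le_nhds_lim⟩

theorem ENNReal.exists_le_of_forall_pos_le_add {ι : Type*} [Finite ι] {M : ι → ℝ≥0∞}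
    {a : ℝ≥0∞} (h : ∀ ε : ℝ≥0, 0 < ε → ∃ k, M k ≤ a + ε) : ∃ k, M k ≤ a := by
  obtain ⟨k, -⟩ := h 1 one_pos
  have : Nonempty ι := ⟨k⟩
  obtain ⟨k₀, hk₀⟩ := Finite.exists_min M
  refine ⟨k₀, ENNReal.le_of_forall_pos_le_add fun ε hε _ => ?_⟩
  obtain ⟨k, hk⟩ := h ε hε
  exact (hk₀ k).trans hk

namespace ApproxIntermediatePointProperty

variable {X : Type*} [MetricSpace X]

theorem exists_dist_le_two_mul (hX : ApproxIntermediatePointProperty X) {x y : X} {r ε : ℝ}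
    (hr : 0 ≤ r) (hε : 0 < ε) (hxy : dist x y ≤ r + ε) :
    ∃ z, dist x z ≤ r ∧ dist z y ≤ 2 * ε := by
  by_cases hyr : dist x y ≤ r
  · exact ⟨y, hyr, by simp [hε.le]⟩
  by_cases hrε : r ≤ ε
  · exact ⟨x, by simpa using hr, by linarith⟩
  obtain ⟨z, hxz, hzy⟩ := hX x y (ε / 2) (half_pos hε) (r - ε / 2) ⟨by linarith, by linarith⟩
  exact ⟨z, by linarith, by linarith⟩

theorem exists_dist_center_le (hX : ApproxIntermediatePointProperty X) {ι : Type*}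
    {c : ι → X} {x y : X} {r ρ ε : ℝ} (hc : closedBall x r ⊆ ⋃ k, closedBall (c k) ρ)
    (hr : 0 ≤ r) (hε : 0 < ε) (hxy : dist x y ≤ r + ε) :
    ∃ k, dist (c k) y ≤ ρ + 2 * ε := by
  obtain ⟨z, hxz, hzy⟩ := hX.exists_dist_le_two_mul hr hε hxy
  obtain ⟨k, hk⟩ := Set.mem_iUnion.mp (hc (mem_closedBall'.mpr hxz))
  exact ⟨k, (dist_triangle _ z _).trans (add_le_add (mem_closedBall'.mp hk) hzy)⟩

end ApproxIntermediatePointProperty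

/-- The ultralimit of doubling metric spaces (with the approximate
intermediate point property, e.g. length spaces) with a common doubling constant
`N` is doubling with the same constant (pointwise form). -/
theorem ultralimit_doubling
    {I : Type*} (ω : Ultrafilter I) (N : ℕ) (X : I → Type*) [∀ i, MetricSpace (X i)]
    (hX : ∀ i, ApproxIntermediatePointProperty (X i))
    (hdoub : ∀ i, DoublingWithConstant (X i) N)
    (r : ℝ) (hr : 0 < r) (x : ∀ i, X i) :
    ∃ c : ∀ i, Fin N → X i,
      ∀ y : ∀ i, X i, ∀ L : ℝ≥0∞,
        Tendsto (fun i => edist (x i) (y i)) (ω : Filter I) (nhds L) →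
        L ≤ ENNReal.ofReal r →
        ∃ k : Fin N, ∃ M : ℝ≥0∞,
          Tendsto (fun i => edist (c i k) (y i)) (ω : Filter I) (nhds M) ∧
          M ≤ ENNReal.ofReal (r / 2) := by
  choose c hc using fun i => hdoub i (x i) r
  refine ⟨c, fun y L hL hLr => ?_⟩
  choose M hM using fun k => ω.exists_tendsto fun i => edist (c i k) (y i)
  suffices ∀ ε : ℝ≥0, 0 < ε → ∃ k, M k ≤ ENNReal.ofReal (r / 2) + ε by
    obtain ⟨k, hk⟩ := ENNReal.exists_le_of_forall_pos_le_add this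
    exact ⟨k, M k, hM k, hk⟩
  intro ε hε
  have hε₂ : (0 : ℝ) < ε / 2 := by positivity
  have hnear : ∀ᶠ i in (ω : Filter I), dist (x i) (y i) ≤ r + ε / 2 := by
    have hL_lt : L < ENNReal.ofReal (r + ε / 2) :=
      hLr.trans_lt ((ENNReal.ofReal_lt_ofReal_iff (by linarith)).mpr (by linarith))
    exact (hL.eventually_lt_const hL_lt).mono fun i hi => (edist_lt_ofReal.mp hi).le
  obtain ⟨k, hk⟩ := Ultrafilter.eventually_exists_iff.mp <| hnear.mono fun i hi =>
    (hX i).exists_dist_center_le (hc i) hr.le hε₂ hi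
  refine ⟨k, le_of_tendsto (hM k) (hk.mono fun i hi => ?_)⟩
  rw [← ENNReal.ofReal_coe_nnreal, ← ENNReal.ofReal_add (by positivity) ε.coe_nonneg,
    edist_le_ofReal (by positivity)]
  linarith
end
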